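/- arXiv:2002.03042 — 2 statements merged into one kernel-verified Lean document; each statement's English description precedes it below -/
import Mathlib

section
/- For every finite state sequence ξ = (s_0, s_1, ..., s_{T−1}), the probability of observing ξ when executing the mixture policy π on the original MDP equals the probability of observing ξ when executing the residual policy π_r on the residual MDP: P_0(s_0) Π_{t} Σ_a π(a|s_t) T(s_{t+1}|s_t,a) = P_0(s_0) Π_{t} Σ_{a_r} π_r(a_r|s_t) T_r(s_{t+1}|s_t,a_r). -/
/-- For every finite state sequence ξ, the probability of
observing ξ under the mixture policy π on the original MDP equals the
probability of observing ξ under the residual policy π_r on the residual MDP. -/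
theorem state_sequence_prob_eq
    {S A : Type*} [Fintype S] [Fintype A] [AddGroup A]
    (P0 : S → ℝ) (T : S → A → S → ℝ) (πe : S → A → ℝ) (πr : S → A → ℝ)
    (hπe_sum : ∀ s, ∑ a, πe s a = 1)
    (Tr : S → A → S → ℝ)
    (hTr : ∀ s ar s', Tr s ar s' = ∑ ae, T s (ae + ar) s' * πe s ae)
    (π : S → A → ℝ)
    (hπ : ∀ s a, π s a = ∑ ar, πe s (a - ar) * πr s ar)
    (n : ℕ) (ξ : Fin (n + 1) → S) :
    P0 (ξ 0) * ∏ t : Fin n, ∑ a, π (ξ t.castSucc) a * T (ξ t.castSucc) a (ξ t.succ)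
      = P0 (ξ 0) * ∏ t : Fin n, ∑ ar, πr (ξ t.castSucc) ar * Tr (ξ t.castSucc) ar (ξ t.succ) := by
  congr 1
  apply Finset.prod_congr rfl
  intro t _
  set s := ξ t.castSucc
  set s' := ξ t.succ
  calc ∑ a, π s a * T s a s'
      = ∑ a, ∑ ar, πe s (a - ar) * πr s ar * T s a s' := by
        simp [hπ, Finset.sum_mul]
    _ = ∑ ar, ∑ a, πe s (a - ar) * πr s ar * T s a s' := Finset.sum_comm
    _ = ∑ ar, ∑ ae, πe s ae * πr s ar * T s (ae + ar) s' := by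
        refine Finset.sum_congr rfl fun ar _ => ?_
        exact Fintype.sum_equiv (Equiv.subRight ar) _ _ (fun a => by simp)
    _ = ∑ ar, πr s ar * Tr s ar s' := by
        refine Finset.sum_congr rfl fun ar _ => ?_
        rw [hTr, Finset.mul_sum]
        exact Finset.sum_congr rfl fun ae _ => by ring
end

section
/- If the reward depends only on states, R(τ) = Σ_t R(s_t), then the expected return of the residual policy π_r on the residual MDP equals the expected return of the mixture policy π on the original MDP, over trajectories of any fixed horizon T. -/
/-- If the reward depends only on states, the expected return of
the residual policy on the residual MDP equals the expected return of the
mixture policy on the original MDP, over trajectories of any fixed horizon. -/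
theorem expected_return_eq
    {S A : Type*} [Fintype S] [Fintype A] [AddGroup A]
    (P0 : S → ℝ) (T : S → A → S → ℝ) (πe : S → A → ℝ) (πr : S → A → ℝ)
    (hπe_sum : ∀ s, ∑ a, πe s a = 1)
    (R : S → ℝ)
    (Tr : S → A → S → ℝ)
    (hTr : ∀ s ar s', Tr s ar s' = ∑ ae, T s (ae + ar) s' * πe s ae)
    (π : S → A → ℝ)
    (hπ : ∀ s a, π s a = ∑ ar, πe s (a - ar) * πr s ar)
    (n : ℕ) :
    -- expectation over state sequences of horizon n+1 of the state-only return
    (∑ ξ : Fin (n + 1) → S,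
        (P0 (ξ 0) * ∏ t : Fin n, ∑ a, π (ξ t.castSucc) a * T (ξ t.castSucc) a (ξ t.succ))
          * ∑ t, R (ξ t))
      = ∑ ξ : Fin (n + 1) → S,
          (P0 (ξ 0) * ∏ t : Fin n, ∑ ar, πr (ξ t.castSucc) ar * Tr (ξ t.castSucc) ar (ξ t.succ))
            * ∑ t, R (ξ t) := by
  have key : ∀ s s' : S,
      (∑ a, π s a * T s a s') = ∑ ar, πr s ar * Tr s ar s' := by
    intro s s'
    simp only [hπ, hTr, Finset.sum_mul, Finset.mul_sum]
    rw [Finset.sum_comm]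
    refine Finset.sum_congr rfl fun ar _ => ?_
    rw [← Equiv.sum_comp (Equiv.addRight ar) (fun a => πe s (a - ar) * πr s ar * T s a s')]
    refine Finset.sum_congr rfl fun ae _ => ?_
    simp [Equiv.addRight]
    ring
  refine Finset.sum_congr rfl fun ξ _ => ?_
  congr 2
  exact Finset.prod_congr rfl fun t _ => key _ _
end
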